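/- arXiv:2102.05581 — 2 statements merged into one kernel-verified Lean document; each statement's English description precedes it below -/
import Mathlib

section
/- Consider smooth functions a, x, y, α of a real parameter t, all positive, satisfying the hyperbolic rectangle relation cosh α = cosh x · cosh y · cosh a − sinh x · sinh y. Then along the parameter, |α'·tanh α − a'·tanh a − x'·tanh x − y'·tanh y| ≤ (cosh a − 1)⁻¹·(|a'|·tanh a + |x'|/cosh²x + |y'|/cosh²y), provided cosh a > 1. -/
open Real

set_option maxHeartbeats 1000000 in
theorem derivative_rectangle_estimate (a x y α : ℝ → ℝ)
    (hsa : ContDiff ℝ (⊤ : ℕ∞) a) (hsx : ContDiff ℝ (⊤ : ℕ∞) x) (hsy : ContDiff ℝ (⊤ : ℕ∞) y)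
    (hsα : ContDiff ℝ (⊤ : ℕ∞) α)
    (hpa : ∀ t, 0 < a t) (hpx : ∀ t, 0 < x t) (hpy : ∀ t, 0 < y t)
    (hpα : ∀ t, 0 < α t)
    (hrel : ∀ t, cosh (α t)
      = cosh (x t) * cosh (y t) * cosh (a t) - sinh (x t) * sinh (y t)) :
    ∀ t : ℝ, 1 < cosh (a t) →
      |deriv α t * tanh (α t) - deriv a t * tanh (a t)
          - deriv x t * tanh (x t) - deriv y t * tanh (y t)|
        ≤ (cosh (a t) - 1)⁻¹ *
            (|deriv a t| * tanh (a t) + |deriv x t| / cosh (x t) ^ 2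
              + |deriv y t| / cosh (y t) ^ 2) := by
  intro t hca
  have hda : HasDerivAt a (deriv a t) t := ((hsa.differentiable (by simp)) t).hasDerivAt
  have hdx : HasDerivAt x (deriv x t) t := ((hsx.differentiable (by simp)) t).hasDerivAt
  have hdy : HasDerivAt y (deriv y t) t := ((hsy.differentiable (by simp)) t).hasDerivAt
  have hdα : HasDerivAt α (deriv α t) t := ((hsα.differentiable (by simp)) t).hasDerivAt
  have hL : HasDerivAt (fun s => cosh (α s)) (sinh (α t) * deriv α t) t := hdα.cosh
  have hR : HasDerivAt (fun s => cosh (x s) * cosh (y s) * cosh (a s) - sinh (x s) * sinh (y s))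
      ((sinh (x t) * deriv x t * cosh (y t) + cosh (x t) * (sinh (y t) * deriv y t)) * cosh (a t)
        + cosh (x t) * cosh (y t) * (sinh (a t) * deriv a t)
        - (cosh (x t) * deriv x t * sinh (y t) + sinh (x t) * (cosh (y t) * deriv y t))) t :=
    ((hdx.cosh.mul hdy.cosh).mul hda.cosh).sub (hdx.sinh.mul hdy.sinh)
  have hfun : (fun s => cosh (α s))
      = fun s => cosh (x s) * cosh (y s) * cosh (a s) - sinh (x s) * sinh (y s) := funext hrel
  rw [hfun] at hL
  have heq := hL.unique hR
  have hrelt := hrel t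
  have hX2 := Real.cosh_sq_sub_sinh_sq (x t)
  have hY2 := Real.cosh_sq_sub_sinh_sq (y t)
  have hcA : (0:ℝ) < cosh (a t) := cosh_pos (a t)
  have hcX : (0:ℝ) < cosh (x t) := cosh_pos (x t)
  have hcY : (0:ℝ) < cosh (y t) := cosh_pos (y t)
  have hcα : (0:ℝ) < cosh (α t) := cosh_pos (α t)
  have hsA : (0:ℝ) < sinh (a t) := sinh_pos_iff.2 (hpa t)
  have hsX : (0:ℝ) < sinh (x t) := sinh_pos_iff.2 (hpx t)
  have hsY : (0:ℝ) < sinh (y t) := sinh_pos_iff.2 (hpy t)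
  have hXlt : sinh (x t) < cosh (x t) := by
    nlinarith [Real.cosh_sub_sinh (x t), Real.exp_pos (-(x t))]
  have hYlt : sinh (y t) < cosh (y t) := by
    nlinarith [Real.cosh_sub_sinh (y t), Real.exp_pos (-(y t))]
  have htA : (0:ℝ) < tanh (a t) := by
    rw [tanh_eq_sinh_div_cosh]; positivity
  rw [tanh_eq_sinh_div_cosh (α t), tanh_eq_sinh_div_cosh (a t),
    tanh_eq_sinh_div_cosh (x t), tanh_eq_sinh_div_cosh (y t)]
  set dA := deriv a t
  set dX := deriv x t
  set dY := deriv y t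
  set dAl := deriv α t
  set sA := sinh (a t)
  set sX := sinh (x t)
  set sY := sinh (y t)
  set sAl := sinh (α t)
  set cA := cosh (a t)
  set cX := cosh (x t)
  set cY := cosh (y t)
  set cAl := cosh (α t)
  -- the exact expression for the derivative combination
  have hE : dAl * (sAl / cAl) - dA * (sA / cA) - dX * (sX / cX) - dY * (sY / cY)
      = dA * (sA / cA) * (sX * sY / cAl) - dX / cX ^ 2 * (sY * cX / cAl)
        - dY / cY ^ 2 * (sX * cY / cAl) := by
    have key : (dAl * sAl) * (cA*cX*cY) - dA*sA*(cAl*cX*cY) - dX*sX*(cAl*cA*cY)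
        - dY*sY*(cAl*cA*cX)
        = dA*sA*sX*sY*cX*cY - dX*sY*cA*cY - dY*sX*cA*cX := by
      linear_combination (cA*cX*cY) * heq - (dA*sA*cX*cY + dX*sX*cA*cY + dY*sY*cA*cX) * hrelt
        - dX*sY*cA*cY*hX2 - dY*sX*cA*cX*hY2
    have hne : cAl*cA*cX*cY ≠ 0 := by positivity
    have h2 : dA * (sA / cA) * (sX * sY / cAl) - dX / cX ^ 2 * (sY * cX / cAl)
        - dY / cY ^ 2 * (sX * cY / cAl)
        = (dA*sA*sX*sY*cX*cY - dX*sY*cA*cY - dY*sX*cA*cX) / (cAl*cA*cX*cY) := by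
      field_simp
    rw [h2, eq_div_iff hne, ← key]
    field_simp
  rw [hE]
  -- fraction bounds
  have hca1 : (0:ℝ) < cA - 1 := by linarith
  have e0 : (0:ℝ) ≤ cA * (cX * cY - sX * sY) :=
    mul_nonneg hcA.le (by nlinarith [mul_le_mul hXlt.le hYlt.le hsY.le hcX.le])
  have e1 : (0:ℝ) ≤ cA * cX * (cY - sY) :=
    mul_nonneg (mul_nonneg hcA.le hcX.le) (by linarith)
  have e2 : (0:ℝ) ≤ sY * (cX - sX) := mul_nonneg hsY.le (by linarith)
  have e3 : (0:ℝ) ≤ cA * cY * (cX - sX) :=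
    mul_nonneg (mul_nonneg hcA.le hcY.le) (by linarith)
  have e4 : (0:ℝ) ≤ sX * (cY - sY) := mul_nonneg hsX.le (by linarith)
  have hF1 : sX * sY / cAl ≤ (cA - 1)⁻¹ := by
    rw [inv_eq_one_div, div_le_div_iff₀ hcα hca1, hrelt]
    linarith only [e0]
  have hF2 : sY * cX / cAl ≤ (cA - 1)⁻¹ := by
    rw [inv_eq_one_div, div_le_div_iff₀ hcα hca1, hrelt]
    linarith only [e1, e2]
  have hF3 : sX * cY / cAl ≤ (cA - 1)⁻¹ := by
    rw [inv_eq_one_div, div_le_div_iff₀ hcα hca1, hrelt]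
    linarith only [e3, e4]
  have hfrac1 : (0:ℝ) ≤ sX * sY / cAl := by positivity
  have hfrac2 : (0:ℝ) ≤ sY * cX / cAl := by positivity
  have hfrac3 : (0:ℝ) ≤ sX * cY / cAl := by positivity
  have habs : |dA * (sA / cA) * (sX * sY / cAl) - dX / cX ^ 2 * (sY * cX / cAl)
        - dY / cY ^ 2 * (sX * cY / cAl)|
      ≤ |dA| * (sA / cA) * (sX * sY / cAl) + |dX| / cX ^ 2 * (sY * cX / cAl)
        + |dY| / cY ^ 2 * (sX * cY / cAl) := by
    have h1 : |dA * (sA / cA) * (sX * sY / cAl)| = |dA| * (sA / cA) * (sX * sY / cAl) := by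
      rw [abs_mul, abs_mul, abs_of_nonneg (by positivity : (0:ℝ) ≤ sA / cA),
        abs_of_nonneg hfrac1]
    have h2 : |dX / cX ^ 2 * (sY * cX / cAl)| = |dX| / cX ^ 2 * (sY * cX / cAl) := by
      rw [abs_mul, abs_div, abs_of_nonneg (by positivity : (0:ℝ) ≤ cX ^ 2),
        abs_of_nonneg hfrac2]
    have h3 : |dY / cY ^ 2 * (sX * cY / cAl)| = |dY| / cY ^ 2 * (sX * cY / cAl) := by
      rw [abs_mul, abs_div, abs_of_nonneg (by positivity : (0:ℝ) ≤ cY ^ 2),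
        abs_of_nonneg hfrac3]
    calc |dA * (sA / cA) * (sX * sY / cAl) - dX / cX ^ 2 * (sY * cX / cAl)
          - dY / cY ^ 2 * (sX * cY / cAl)|
        ≤ |dA * (sA / cA) * (sX * sY / cAl) - dX / cX ^ 2 * (sY * cX / cAl)|
          + |dY / cY ^ 2 * (sX * cY / cAl)| := abs_sub _ _
      _ ≤ |dA * (sA / cA) * (sX * sY / cAl)| + |dX / cX ^ 2 * (sY * cX / cAl)|
          + |dY / cY ^ 2 * (sX * cY / cAl)| := by linarith [abs_sub (dA * (sA / cA) * (sX * sY / cAl)) (dX / cX ^ 2 * (sY * cX / cAl))]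
      _ = _ := by rw [h1, h2, h3]
  refine habs.trans ?_
  have g1 : |dA| * (sA / cA) * (sX * sY / cAl) ≤ |dA| * (sA / cA) * (cA - 1)⁻¹ :=
    mul_le_mul_of_nonneg_left hF1 (by positivity)
  have g2 : |dX| / cX ^ 2 * (sY * cX / cAl) ≤ |dX| / cX ^ 2 * (cA - 1)⁻¹ :=
    mul_le_mul_of_nonneg_left hF2 (by positivity)
  have g3 : |dY| / cY ^ 2 * (sX * cY / cAl) ≤ |dY| / cY ^ 2 * (cA - 1)⁻¹ :=
    mul_le_mul_of_nonneg_left hF3 (by positivity)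
  calc |dA| * (sA / cA) * (sX * sY / cAl) + |dX| / cX ^ 2 * (sY * cX / cAl)
        + |dY| / cY ^ 2 * (sX * cY / cAl)
      ≤ |dA| * (sA / cA) * (cA - 1)⁻¹ + |dX| / cX ^ 2 * (cA - 1)⁻¹
        + |dY| / cY ^ 2 * (cA - 1)⁻¹ := by linarith
    _ = (cA - 1)⁻¹ * (|dA| * (sA / cA) + |dX| / cX ^ 2 + |dY| / cY ^ 2) := by ring
end

section
/- Let a, b, c > 0 with tanh-values bounded below, and define cosh β = (cosh b + cosh a·cosh c)/(sinh a·sinh c), assuming this is ≥ 1. If sinh²w ≥ 2·cosh a·cosh c/cosh b for some w ≥ 0 (equivalently cosh a·cosh c ≤ (1/2)sinh²w·cosh b), then cosh β ≥ 1 + 2/sinh²w. -/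
open Real

theorem cosh_beta_lower_bound (a b c β w : ℝ) (ha : 0 < a) (hb : 0 < b)
    (hc : 0 < c) (hβ : 0 ≤ β) (hw : 0 ≤ w)
    (hcoshβ : cosh β = (cosh b + cosh a * cosh c) / (sinh a * sinh c))
    (hbound : cosh a * cosh c ≤ (1 / 2) * sinh w ^ 2 * cosh b) :
    cosh β ≥ 1 + 2 / sinh w ^ 2 := by
  have hsa : 0 < sinh a := Real.sinh_pos_iff.2 ha
  have hsc : 0 < sinh c := Real.sinh_pos_iff.2 hc
  have h1 : 0 < sinh a * sinh c := mul_pos hsa hsc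
  have hca : 0 < cosh a := Real.cosh_pos _
  have hcc : 0 < cosh c := Real.cosh_pos _
  have hcb : 0 < cosh b := Real.cosh_pos _
  have h2 : sinh a * sinh c ≤ cosh a * cosh c :=
    mul_le_mul (Real.sinh_lt_cosh a).le (Real.sinh_lt_cosh c).le hsc.le hca.le
  have hsw2 : 0 < sinh w ^ 2 := by nlinarith [mul_pos hca hcc]
  have hdiv : 2 / sinh w ^ 2 * sinh w ^ 2 = 2 := div_mul_cancel₀ _ (ne_of_gt hsw2)
  rw [hcoshβ, ge_iff_le, le_div_iff₀ h1]
  nlinarith [mul_pos h1 hsw2, div_nonneg (by norm_num : (0:ℝ) ≤ 2) hsw2.le,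
    mul_le_mul_of_nonneg_right h2 hsw2.le]
end
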